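/- arXiv:1502.03871 — 8 statements merged into one kernel-verified Lean document; each statement's English description precedes it below -/
import Mathlib

section
/- Fix real numbers λ > 0 and θ > 0 and a natural number i. Define φ_i : ℝ × [0,∞) → ℝ by φ_i(z,t) = (1 − (1−z)e^{−θt})^i · exp( −(λ/θ)(1−z)(1−e^{−θt}) ). Then φ_i(z,0) = z^i for all z ∈ ℝ, and for all z ∈ ℝ and t > 0 one has ∂φ_i/∂t(z,t) = θ(1−z) ∂φ_i/∂z(z,t) − λ(1−z) φ_i(z,t); that is, φ_i solves the order-book generating-function PDE ∂φ/∂t = θ(1−z)∂φ/∂z − λ(1−G(z))φ with unit-size limit orders G(z) = z and initial condition φ(z,0) = z^i. -/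
/-!
Write `φ = u ^ i * exp v` with `u = 1 - (1 - z) e^{-θt}` and `v = -(λ/θ)(1 - z)(1 - e^{-θt})`.
The transport operator `∂ₜ - θ(1 - z)∂_z` is a derivation; it kills `u`, which is constant along
the characteristics of the cancellation flow, and sends `v` to `-λ(1 - z)`. Hence it sends `φ` to
`-λ(1 - z)φ`.
-/

open Real

lemma hasDerivAt_pow_mul_exp {f g : ℝ → ℝ} {f' g' x : ℝ} (n : ℕ)
    (hf : HasDerivAt f f' x) (hg : HasDerivAt g g' x) :
    HasDerivAt (fun y => f y ^ n * exp (g y))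
      ((n * f x ^ (n - 1) * f' + f x ^ n * g') * exp (g x)) x :=
  ((hf.fun_pow n).mul hg.exp).congr_deriv (by ring)

lemma deriv_pow_mul_exp_eq_transport {f g : ℝ → ℝ → ℝ} {z t c d fz ft gz gt : ℝ} (n : ℕ)
    (hfz : HasDerivAt (fun w => f w t) fz z) (hft : HasDerivAt (fun s => f z s) ft t)
    (hgz : HasDerivAt (fun w => g w t) gz z) (hgt : HasDerivAt (fun s => g z s) gt t)
    (hf : ft = c * fz) (hg : gt = c * gz - d) :
    deriv (fun s => f z s ^ n * exp (g z s)) t =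
      c * deriv (fun w => f w t ^ n * exp (g w t)) z - d * (f z t ^ n * exp (g z t)) := by
  rw [(hasDerivAt_pow_mul_exp n hft hgt).deriv, (hasDerivAt_pow_mul_exp n hfz hgz).deriv, hf, hg]
  ring

lemma hasDerivAt_exp_neg_mul (θ t : ℝ) :
    HasDerivAt (fun s => exp (-θ * s)) (-θ * exp (-θ * t)) t := by
  simpa [mul_comm] using ((hasDerivAt_id t).const_mul (-θ)).exp

lemma hasDerivAt_characteristic_time (θ z t : ℝ) :
    HasDerivAt (fun s => 1 - (1 - z) * exp (-θ * s)) (θ * (1 - z) * exp (-θ * t)) t :=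
  (((hasDerivAt_exp_neg_mul θ t).const_mul (1 - z)).const_sub 1).congr_deriv (by ring)

lemma hasDerivAt_characteristic_space (θ z t : ℝ) :
    HasDerivAt (fun w => 1 - (1 - w) * exp (-θ * t)) (exp (-θ * t)) z := by
  simpa using (((hasDerivAt_id z).const_sub 1).mul_const (exp (-θ * t))).const_sub 1

lemma hasDerivAt_arrival_exponent_time (lam θ z t : ℝ) :
    HasDerivAt (fun s => -(lam / θ) * (1 - z) * (1 - exp (-θ * s)))
      (-(lam / θ) * (1 - z) * (θ * exp (-θ * t))) t :=
  (((hasDerivAt_exp_neg_mul θ t).const_sub 1).const_mul (-(lam / θ) * (1 - z))).congr_deriv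
    (by ring)

lemma hasDerivAt_arrival_exponent_space (lam θ z t : ℝ) :
    HasDerivAt (fun w => -(lam / θ) * (1 - w) * (1 - exp (-θ * t)))
      ((lam / θ) * (1 - exp (-θ * t))) z :=
  ((((hasDerivAt_id z).const_sub 1).const_mul (-(lam / θ))).mul_const
    (1 - exp (-θ * t))).congr_deriv (by ring)

theorem orderbook_generating_function_pde_unit_size_general
    (lam th : ℝ) (hth : 0 < th) (i : ℕ) :
    let φ : ℝ → ℝ → ℝ := fun z t =>
      (1 - (1 - z) * Real.exp (-th * t)) ^ i *
        Real.exp (-(lam / th) * (1 - z) * (1 - Real.exp (-th * t)))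
    (∀ z : ℝ, φ z 0 = z ^ i) ∧
      ∀ z t : ℝ, 0 < t →
        deriv (fun s => φ z s) t =
          th * (1 - z) * deriv (fun w => φ w t) z - lam * (1 - z) * φ z t := by
  intro φ
  refine ⟨fun z => by simp [φ], fun z t _ => ?_⟩
  refine deriv_pow_mul_exp_eq_transport (f := fun z t => 1 - (1 - z) * exp (-th * t))
    (g := fun z t => -(lam / th) * (1 - z) * (1 - exp (-th * t))) i
    (hasDerivAt_characteristic_space th z t) (hasDerivAt_characteristic_time th z t)
    (hasDerivAt_arrival_exponent_space lam th z t) (hasDerivAt_arrival_exponent_time lam th z t)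
    (by ring) ?_
  field_simp
  ring

/-- In the one-sided order-book model with unit-size limit orders
arriving at rate `lam > 0` and per-share cancellation rate `th > 0`, the function
`φ_i(z,t) = (1-(1-z)e^{-θt})^i exp(-(λ/θ)(1-z)(1-e^{-θt}))` satisfies `φ_i(z,0) = z^i`
and the PDE `∂φ/∂t = θ(1-z)∂φ/∂z - λ(1-z)φ`. -/
theorem orderbook_generating_function_pde_unit_size
    (lam th : ℝ) (hlam : 0 < lam) (hth : 0 < th) (i : ℕ) :
    let φ : ℝ → ℝ → ℝ := fun z t =>
      (1 - (1 - z) * Real.exp (-th * t)) ^ i *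
        Real.exp (-(lam / th) * (1 - z) * (1 - Real.exp (-th * t)))
    (∀ z : ℝ, φ z 0 = z ^ i) ∧
      ∀ z t : ℝ, 0 < t →
        deriv (fun s => φ z s) t =
          th * (1 - z) * deriv (fun w => φ w t) z - lam * (1 - z) * φ z t :=
  orderbook_generating_function_pde_unit_size_general lam th hth i
end

section
/- Fix real numbers λ > 0, θ > 0, a natural number i, and t ≥ 0. For j ∈ ℕ define r_{ij}(t) = Σ_{k=0}^{min(i,j)} [ i! / (k!(i−k)!(j−k)!) ] (λ/θ)^{j−k} e^{−kθt} (1−e^{−θt})^{i+j−2k} e^{−(λ/θ)(1−e^{−θt})}. Then for every z ∈ ℝ the series Σ_{j=0}^∞ r_{ij}(t) z^j converges and its sum equals (1 − (1−z)e^{−θt})^i · exp( −(λ/θ)(1−z)(1−e^{−θt}) ); i.e., the r_{ij}(t) are exactly the Taylor coefficients in z at 0 of the generating function φ_i(z,t). -/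
/-!
Write `a = e^{-θt}`, `b = 1 - a`, `c = λ/θ`. The generating function factors as
`(a z + b)^i · e^{-cb} · e^{cbz}`: a polynomial of degree `i` times an exponential series.
Its Taylor coefficients are therefore the finite Cauchy products of the binomial coefficients
`C(i,k) a^k b^{i-k}` with the Poisson-type coefficients `(cb)^m / m!`, which is the formula for
`r_{ij}(t)`.
-/

open Finset Nat

section CauchyProduct

variable {α : Type*}

theorem HasSum.shift_right [AddCommMonoid α] [TopologicalSpace α] {f : ℕ → α} {s : α}
    (hf : HasSum f s) (k : ℕ) :
    HasSum (fun j => if k ≤ j then f (j - k) else 0) s := by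
  have hinj : Function.Injective (· + k) := add_left_injective k
  refine (hinj.hasSum_iff fun j hj => if_neg fun hkj => hj ⟨j - k, show j - k + k = j by omega⟩).mp ?_
  simpa [Function.comp_def] using hf

theorem HasSum.cauchy_product_sum_range [NonUnitalNonAssocSemiring α] [TopologicalSpace α]
    [IsTopologicalSemiring α] {f : ℕ → α} {s : α} (hf : HasSum f s) (p : ℕ → α) (n : ℕ) :
    HasSum (fun j => ∑ k ∈ range (min n j + 1), p k * f (j - k))
      ((∑ k ∈ range (n + 1), p k) * s) := by
  rw [sum_mul]
  convert hasSum_sum fun k _ => (hf.mul_left (p k)).shift_right k using 2 with j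
  rw [← sum_filter]
  congr 1
  ext k
  simp only [mem_range, mem_filter]
  omega

end CauchyProduct

theorem Real.hasSum_add_pow_mul_exp (a b c z : ℝ) (i : ℕ) :
    HasSum (fun j => ∑ k ∈ range (min i j + 1),
        (i ! : ℝ) / (k ! * (i - k)! * (j - k)!) * c ^ (j - k) * a ^ k * b ^ (i + j - 2 * k) * z ^ j)
      ((a * z + b) ^ i * Real.exp (c * b * z)) := by
  have hexp : HasSum (fun m => (c * b * z) ^ m / m !) (Real.exp (c * b * z)) := by
    rw [Real.exp_eq_exp_ℝ]
    exact NormedSpace.expSeries_div_hasSum_exp _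
  rw [add_pow]
  -- `convert!`: the two `AddCommMonoid ℝ` instances in play agree only up to unfolding.
  convert! hexp.cauchy_product_sum_range (fun k => (a * z) ^ k * b ^ (i - k) * i.choose k) i
    using 2 with j
  refine sum_congr rfl fun k hk => ?_
  have hki : k ≤ i := by simp only [mem_range] at hk; omega
  have hkj : k ≤ j := by simp only [mem_range] at hk; omega
  have hb : b ^ (i + j - 2 * k) = b ^ (i - k) * b ^ (j - k) := by
    rw [← pow_add]; congr 1; omega
  have hz : z ^ j = z ^ k * z ^ (j - k) := by
    rw [← pow_add]; congr 1; omega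
  rw [hb, hz, Nat.cast_choose ℝ hki]
  field_simp
  ring

theorem orderbook_transition_probabilities_unit_size_general
    (lam th : ℝ) (i : ℕ) (t : ℝ) :
    let r : ℕ → ℝ := fun j =>
      ∑ k ∈ Finset.range (min i j + 1),
        (Nat.factorial i : ℝ) /
            ((Nat.factorial k : ℝ) * (Nat.factorial (i - k) : ℝ) *
              (Nat.factorial (j - k) : ℝ)) *
          (lam / th) ^ (j - k) * Real.exp (-(k : ℝ) * th * t) *
          (1 - Real.exp (-th * t)) ^ (i + j - 2 * k) *
          Real.exp (-(lam / th) * (1 - Real.exp (-th * t)))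
    ∀ z : ℝ,
      HasSum (fun j : ℕ => r j * z ^ j)
        ((1 - (1 - z) * Real.exp (-th * t)) ^ i *
          Real.exp (-(lam / th) * (1 - z) * (1 - Real.exp (-th * t)))) := by
  intro r z
  simp only [r]
  set a := Real.exp (-th * t)
  set b := 1 - a with hb
  set c := lam / th
  have hexp_k (k : ℕ) : Real.exp (-(k : ℝ) * th * t) = a ^ k := by
    rw [← Real.exp_nat_mul]; ring_nf
  have hbase : 1 - (1 - z) * a = a * z + b := by rw [hb]; ring
  have hexp_split : Real.exp (-c * (1 - z) * b) = Real.exp (c * b * z) * Real.exp (-c * b) := by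
    rw [← Real.exp_add]; ring_nf
  rw [hbase, hexp_split, ← mul_assoc]
  convert! (Real.hasSum_add_pow_mul_exp a b c z i).mul_right (Real.exp (-c * b)) using 2 with j
  simp only [sum_mul, hexp_k]
  refine sum_congr rfl fun k _ => ?_
  ring

/-- The explicit coefficients `r_{ij}(t)` are exactly the Taylor
coefficients of the generating function
`φ_i(z,t) = (1-(1-z)e^{-θt})^i exp(-(λ/θ)(1-z)(1-e^{-θt}))` of the transition
probabilities of the order-book queue with unit-size limit orders. -/
theorem orderbook_transition_probabilities_unit_size
    (lam th : ℝ) (hlam : 0 < lam) (hth : 0 < th) (i : ℕ) (t : ℝ) (ht : 0 ≤ t) :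
    let r : ℕ → ℝ := fun j =>
      ∑ k ∈ Finset.range (min i j + 1),
        (Nat.factorial i : ℝ) /
            ((Nat.factorial k : ℝ) * (Nat.factorial (i - k) : ℝ) *
              (Nat.factorial (j - k) : ℝ)) *
          (lam / th) ^ (j - k) * Real.exp (-(k : ℝ) * th * t) *
          (1 - Real.exp (-th * t)) ^ (i + j - 2 * k) *
          Real.exp (-(lam / th) * (1 - Real.exp (-th * t)))
    ∀ z : ℝ,
      HasSum (fun j : ℕ => r j * z ^ j)
        ((1 - (1 - z) * Real.exp (-th * t)) ^ i *
          Real.exp (-(lam / th) * (1 - z) * (1 - Real.exp (-th * t)))) :=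
  orderbook_transition_probabilities_unit_size_general lam th i t
end

section
/- Fix real numbers λ > 0, θ > 0 and a natural number i. For j ∈ ℕ and t ≥ 0 define r_{ij}(t) = Σ_{k=0}^{min(i,j)} [ i! / (k!(i−k)!(j−k)!) ] (λ/θ)^{j−k} e^{−kθt} (1−e^{−θt})^{i+j−2k} e^{−(λ/θ)(1−e^{−θt})} (and set r_{i,−1} ≡ 0). Then r_{ij}(0) = 1 if j = i and 0 otherwise, and for every t > 0 and every j ∈ ℕ the Kolmogorov forward equation holds: r'_{ij}(t) = −(λ + jθ) r_{ij}(t) + (j+1)θ r_{i,j+1}(t) + λ r_{i,j−1}(t). -/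
/-
Started from `i`, the queue at time `t` is the sum of two independent populations: the `i`
initial shares, each still present with probability `u = e^{-θt}` (a binomial law, which solves
the forward equation of the pure death process), and the shares that arrived after time `0` and
are still present, which are Poisson with mean `(λ/θ)(1 - u)` (this solves the forward equation
of the immigration–death process started empty). The explicit formula for `r_{ij}(t)` is the
convolution of these two laws, and the forward operator of the linear birth–death process obeys
a Leibniz rule for convolutions, so the convolution solves the full forward equation.
-/

open Finset Real
open scoped Nat

namespace BirthDeath

def conv (f g : ℕ → ℝ) (n : ℕ) : ℝ :=
  ∑ x ∈ antidiagonal n, f x.1 * g x.2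

theorem conv_indicator_zero (f : ℕ → ℝ) (n : ℕ) :
    conv f (fun m => if m = 0 then 1 else 0) n = f n := by
  rw [conv, Nat.sum_antidiagonal_eq_sum_range_succ (fun k m => f k * if m = 0 then 1 else 0),
    sum_eq_single_of_mem n (self_mem_range_succ n)]
  · simp
  · intro k hk hkn
    have : n - k ≠ 0 := by grind
    simp [this]

theorem natCast_mul_conv (f g : ℕ → ℝ) (n : ℕ) :
    n * conv f g n = ∑ x ∈ antidiagonal n, ((x.1 : ℝ) + x.2) * (f x.1 * g x.2) := by
  rw [conv, mul_sum]
  refine sum_congr rfl fun x hx => ?_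
  rw [← mem_antidiagonal.1 hx, Nat.cast_add]

theorem succ_mul_conv_succ (f g : ℕ → ℝ) (n : ℕ) :
    (n + 1) * conv f g (n + 1) = ∑ x ∈ antidiagonal n,
      (((x.1 : ℝ) + 1) * f (x.1 + 1) * g x.2 + f x.1 * (((x.2 : ℝ) + 1) * g (x.2 + 1))) := by
  have h := natCast_mul_conv f g (n + 1)
  simp only [add_mul, sum_add_distrib] at h
  rw [Nat.sum_antidiagonal_succ, Nat.sum_antidiagonal_succ'] at h
  push_cast at h
  rw [h, sum_add_distrib]
  simp only [zero_mul, zero_add]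
  congr 1 <;> refine sum_congr rfl fun x _ => ?_ <;> ring

theorem conv_shift (f g : ℕ → ℝ) (n : ℕ) :
    conv f (fun m => if m = 0 then 0 else g (m - 1)) n =
      if n = 0 then 0 else conv f g (n - 1) := by
  cases n with
  | zero => simp [conv]
  | succ n => simp [conv, Nat.sum_antidiagonal_succ']

def forwardOp (lam th : ℝ) (f : ℕ → ℝ) (j : ℕ) : ℝ :=
  -(lam + j * th) * f j + (j + 1) * th * f (j + 1) + lam * (if j = 0 then 0 else f (j - 1))

-- Death rates add up over the two summands of a convolution, while births enter only the second.
theorem forwardOp_conv (lam th : ℝ) (f g : ℕ → ℝ) (n : ℕ) :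
    forwardOp lam th (conv f g) n =
      conv (forwardOp 0 th f) g n + conv f (forwardOp lam th g) n := by
  have h : forwardOp lam th (conv f g) n = -lam * conv f g n - th * (n * conv f g n)
      + th * ((n + 1) * conv f g (n + 1))
      + lam * conv f (fun m => if m = 0 then 0 else g (m - 1)) n := by
    rw [forwardOp, conv_shift]; ring
  rw [h, natCast_mul_conv, succ_mul_conv_succ]
  simp only [conv, forwardOp, mul_sum, ← sum_add_distrib, ← sum_sub_distrib]
  refine sum_congr rfl fun x _ => ?_
  ring

theorem hasDerivAt_conv {f g : ℝ → ℕ → ℝ} {f' g' : ℕ → ℝ} {t : ℝ}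
    (hf : ∀ k, HasDerivAt (fun s => f s k) (f' k) t)
    (hg : ∀ m, HasDerivAt (fun s => g s m) (g' m) t) (n : ℕ) :
    HasDerivAt (fun s => conv (f s) (g s) n) (conv f' (g t) n + conv (f t) g' n) t := by
  rw [conv, conv, ← sum_add_distrib]
  exact HasDerivAt.fun_sum fun x _ => (hf x.1).mul (hg x.2)

theorem hasDerivAt_exp_neg_mul (th t : ℝ) :
    HasDerivAt (fun s => exp (-th * s)) (-th * exp (-th * t)) t := by
  simpa [mul_comm] using ((hasDerivAt_id t).const_mul (-th)).exp

theorem exp_neg_natCast_mul_mul (k : ℕ) (th t : ℝ) :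
    exp (-(k : ℝ) * th * t) = exp (-th * t) ^ k := by
  rw [← exp_nat_mul]
  ring_nf

noncomputable def binomialProb (i : ℕ) (u : ℝ) (k : ℕ) : ℝ :=
  i.choose k * u ^ k * (1 - u) ^ (i - k)

theorem binomialProb_one (i k : ℕ) : binomialProb i 1 k = if k = i then 1 else 0 := by
  rcases lt_trichotomy k i with h | rfl | h
  · simp [binomialProb, h.ne, Nat.sub_ne_zero_of_lt h]
  · simp [binomialProb]
  · simp [binomialProb, h.ne', Nat.choose_eq_zero_of_lt h]

theorem hasDerivAt_binomialProb (i k : ℕ) (u : ℝ) :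
    HasDerivAt (fun v => binomialProb i v k)
      (i.choose k * (k * u ^ (k - 1) * (1 - u) ^ (i - k)
        - (i - k : ℕ) * u ^ k * (1 - u) ^ (i - k - 1))) u := by
  have h := ((hasDerivAt_pow k u).mul (((hasDerivAt_id' u).const_sub 1).pow (i - k))).const_mul
    (i.choose k : ℝ)
  simp only [binomialProb, mul_assoc]
  exact h.congr_deriv (by simp only [Pi.pow_apply]; ring)

theorem hasDerivAt_binomialProb_exp (i k : ℕ) (th t : ℝ) :
    HasDerivAt (fun s => binomialProb i (exp (-th * s)) k)
      (forwardOp 0 th (binomialProb i (exp (-th * t))) k) t := by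
  refine ((hasDerivAt_binomialProb i k _).comp t (hasDerivAt_exp_neg_mul th t)).congr_deriv ?_
  generalize exp (-th * t) = u
  have hchoose : ((k : ℝ) + 1) * i.choose (k + 1) = i.choose k * (i - k : ℕ) := by
    exact_mod_cast (mul_comm _ _).trans (Nat.choose_succ_right_eq i k)
  have hpow : (k : ℝ) * u ^ (k - 1) * u = k * u ^ k := by
    cases k <;> simp [pow_succ]; ring
  simp only [forwardOp, binomialProb]
  rw [Nat.sub_add_eq]
  linear_combination (-th * i.choose k * (1 - u) ^ (i - k)) * hpow
    - th * u ^ (k + 1) * (1 - u) ^ (i - k - 1) * hchoose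

noncomputable def poissonProb (μ : ℝ) (m : ℕ) : ℝ :=
  exp (-μ) * μ ^ m / m !

theorem poissonProb_zero : poissonProb 0 = fun m => if m = 0 then 1 else 0 := by
  ext m
  cases m <;> simp [poissonProb]

theorem succ_mul_poissonProb_succ (μ : ℝ) (m : ℕ) :
    (m + 1) * poissonProb μ (m + 1) = μ * poissonProb μ m := by
  simp only [poissonProb, Nat.factorial_succ, Nat.cast_mul, pow_succ]
  field_simp
  push_cast
  ring

theorem hasDerivAt_poissonProb (μ : ℝ) (m : ℕ) :
    HasDerivAt (fun ν => poissonProb ν m)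
      ((if m = 0 then 0 else poissonProb μ (m - 1)) - poissonProb μ m) μ := by
  have h := (((hasDerivAt_neg μ).exp).mul (hasDerivAt_pow m μ)).div_const (m ! : ℝ)
  refine h.congr_deriv ?_
  cases m with
  | zero => simp [poissonProb]
  | succ n =>
    simp only [poissonProb, Nat.factorial_succ, Nat.cast_mul, if_neg n.succ_ne_zero,
      Nat.add_sub_cancel]
    field_simp
    push_cast
    ring

theorem hasDerivAt_poissonProb_mean (lam : ℝ) {th : ℝ} (hth : th ≠ 0) (m : ℕ) (t : ℝ) :
    HasDerivAt (fun s => poissonProb (lam / th * (1 - exp (-th * s))) m)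
      (forwardOp lam th (poissonProb (lam / th * (1 - exp (-th * t)))) m) t := by
  have hmean : HasDerivAt (fun s => lam / th * (1 - exp (-th * s))) (lam * exp (-th * t)) t :=
    ((hasDerivAt_exp_neg_mul th t).const_sub 1).const_mul (lam / th) |>.congr_deriv
      (by field_simp)
  refine ((hasDerivAt_poissonProb _ m).comp t hmean).congr_deriv ?_
  have hμ : th * (lam / th * (1 - exp (-th * t))) = lam * (1 - exp (-th * t)) := by field_simp
  generalize lam / th * (1 - exp (-th * t)) = μ at hμ ⊢
  have hsucc := succ_mul_poissonProb_succ μ m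
  cases m with
  | zero =>
    simp only [forwardOp, ↓reduceIte, Nat.cast_zero] at hsucc ⊢
    linear_combination -th * hsucc - poissonProb μ 0 * hμ
  | succ n =>
    have hprev := succ_mul_poissonProb_succ μ n
    simp only [forwardOp, if_neg n.succ_ne_zero, Nat.add_sub_cancel]
    push_cast at hsucc ⊢
    linear_combination th * hprev - th * hsucc + (poissonProb μ n - poissonProb μ (n + 1)) * hμ

theorem conv_binomialProb_poissonProb (lam th t : ℝ) (i j : ℕ) :
    conv (binomialProb i (exp (-th * t))) (poissonProb (lam / th * (1 - exp (-th * t)))) j =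
      ∑ k ∈ range (min i j + 1), (i ! : ℝ) / ((k ! : ℝ) * ((i - k)! : ℝ) * ((j - k)! : ℝ)) *
        (lam / th) ^ (j - k) * exp (-(k : ℝ) * th * t) * (1 - exp (-th * t)) ^ (i + j - 2 * k) *
        exp (-(lam / th) * (1 - exp (-th * t))) := by
  rw [conv, Nat.sum_antidiagonal_eq_sum_range_succ
    (fun k m => binomialProb i (exp (-th * t)) k * poissonProb _ m)]
  symm
  calc _ = ∑ k ∈ range (min i j + 1), binomialProb i (exp (-th * t)) k *
          poissonProb (lam / th * (1 - exp (-th * t))) (j - k) := by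
        refine sum_congr rfl fun k hk => ?_
        have hki : k ≤ i := by grind
        have hkj : k ≤ j := by grind
        rw [binomialProb, poissonProb, Nat.cast_choose ℝ hki, exp_neg_natCast_mul_mul,
          show i + j - 2 * k = (i - k) + (j - k) by omega, pow_add, mul_pow, neg_mul]
        field_simp
    _ = _ := by
        refine sum_subset (range_subset_range.2 (by omega)) fun k hk hkmin => ?_
        have hik : i < k := by grind
        simp [binomialProb, Nat.choose_eq_zero_of_lt hik]

end BirthDeath

open BirthDeath

theorem orderbook_kolmogorov_forward_unit_size_general
    (lam th : ℝ) (hth : 0 < th) (i : ℕ) :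
    let r : ℕ → ℝ → ℝ := fun j t =>
      ∑ k ∈ Finset.range (min i j + 1),
        (Nat.factorial i : ℝ) /
            ((Nat.factorial k : ℝ) * (Nat.factorial (i - k) : ℝ) *
              (Nat.factorial (j - k) : ℝ)) *
          (lam / th) ^ (j - k) * Real.exp (-(k : ℝ) * th * t) *
          (1 - Real.exp (-th * t)) ^ (i + j - 2 * k) *
          Real.exp (-(lam / th) * (1 - Real.exp (-th * t)))
    (∀ j : ℕ, r j 0 = if j = i then 1 else 0) ∧
      ∀ t : ℝ, 0 < t → ∀ j : ℕ,
        deriv (fun s => r j s) t =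
          -(lam + (j : ℝ) * th) * r j t + ((j : ℝ) + 1) * th * r (j + 1) t +
            lam * (if j = 0 then 0 else r (j - 1) t) := by
  intro r
  have hr (t : ℝ) : (fun j => r j t) = conv (binomialProb i (exp (-th * t)))
      (poissonProb (lam / th * (1 - exp (-th * t)))) :=
    funext fun j => (conv_binomialProb_poissonProb lam th t i j).symm
  refine ⟨fun j => ?_, fun t _ j => ?_⟩
  · simpa only [mul_zero, exp_zero, sub_self, poissonProb_zero, conv_indicator_zero,
      binomialProb_one] using congrFun (hr 0) j
  · have hd := hasDerivAt_conv (fun k => hasDerivAt_binomialProb_exp i k th t)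
      (fun m => hasDerivAt_poissonProb_mean lam hth.ne' m t) j
    simp only [← forwardOp_conv, ← hr] at hd
    exact hd.deriv

/-- The explicit transition probabilities `r_{ij}(t)` of the
order-book queue with unit-size limit orders (birth rate `λ`, death rate `jθ`)
satisfy `r_{ij}(0) = δ_{ij}` and the Kolmogorov forward equations
`r'_{ij}(t) = -(λ+jθ) r_{ij}(t) + (j+1)θ r_{i,j+1}(t) + λ r_{i,j-1}(t)`
(with the convention `r_{i,-1} ≡ 0`). -/
theorem orderbook_kolmogorov_forward_unit_size
    (lam th : ℝ) (hlam : 0 < lam) (hth : 0 < th) (i : ℕ) :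
    let r : ℕ → ℝ → ℝ := fun j t =>
      ∑ k ∈ Finset.range (min i j + 1),
        (Nat.factorial i : ℝ) /
            ((Nat.factorial k : ℝ) * (Nat.factorial (i - k) : ℝ) *
              (Nat.factorial (j - k) : ℝ)) *
          (lam / th) ^ (j - k) * Real.exp (-(k : ℝ) * th * t) *
          (1 - Real.exp (-th * t)) ^ (i + j - 2 * k) *
          Real.exp (-(lam / th) * (1 - Real.exp (-th * t)))
    (∀ j : ℕ, r j 0 = if j = i then 1 else 0) ∧
      ∀ t : ℝ, 0 < t → ∀ j : ℕ,
        deriv (fun s => r j s) t =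
          -(lam + (j : ℝ) * th) * r j t + ((j : ℝ) + 1) * th * r (j + 1) t +
            lam * (if j = 0 then 0 else r (j - 1) t) :=
  orderbook_kolmogorov_forward_unit_size_general lam th hth i
end

section
/- Let λ > 0, θ > 0, let (g_n)_{n≥1} be nonnegative reals with Σ_{n≥1} g_n = 1, and let (ρ_n)_{n≥0} be a nonnegative summable sequence satisfying the balance equations: 0 = −λρ_0 + θρ_1, and for every n ≥ 1, 0 = −(λ + nθ)ρ_n + (n+1)θ ρ_{n+1} + λ Σ_{i=1}^{n} g_i ρ_{n−i}. Let ψ(z) = Σ_{n=0}^∞ ρ_n z^n and G(z) = Σ_{n=1}^∞ g_n z^n. Then for every z ∈ [0,1), ψ is differentiable at z and θ(1−z) ψ'(z) = λ(1 − G(z)) ψ(z). -/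
/-!
Multiplying the `n`-th balance equation by `zⁿ` and summing over `n` gives
`λψ + θzψ' = θψ' + λGψ`: the cancellation terms `nθρₙzⁿ` and `(n+1)θρₙ₊₁zⁿ` sum to `θzψ'` and
`θψ'`, and the convolution `∑ gᵢρₙ₋ᵢ` sums to `Gψ` by the Cauchy product. Summable coefficients
are bounded, so all these series converge absolutely on the open unit disc and `ψ` may be
differentiated termwise there.
-/

open Finset Metric

section PowerSeries

variable {𝕜 : Type*} [RCLike 𝕜] {a : ℕ → 𝕜} {C : ℝ} {z : 𝕜}

theorem summable_norm_mul_pow_of_norm_le (hC : ∀ n, ‖a n‖ ≤ C) (hz : ‖z‖ < 1) :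
    Summable fun n => ‖a n * z ^ n‖ := by
  refine .of_nonneg_of_le (fun n => norm_nonneg _) (fun n => ?_)
    ((summable_geometric_of_lt_one (norm_nonneg z) hz).mul_left C)
  rw [norm_mul, norm_pow]
  exact mul_le_mul_of_nonneg_right (hC n) (by positivity)

theorem summable_nat_mul_pow_pred {r : ℝ} (hr : ‖r‖ < 1) :
    Summable fun n : ℕ => (n : ℝ) * r ^ (n - 1) := by
  rw [← summable_nat_add_iff 1]
  simpa [add_mul] using
    (summable_pow_mul_geometric_of_norm_lt_one 1 hr).add (summable_geometric_of_norm_lt_one hr)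

theorem norm_mul_nat_mul_pow_pred_le (hC : ∀ n, ‖a n‖ ≤ C) {r : ℝ} (hz : ‖z‖ ≤ r) (n : ℕ) :
    ‖a n * (n * z ^ (n - 1))‖ ≤ C * (n * r ^ (n - 1)) := by
  rw [norm_mul, norm_mul, norm_pow, RCLike.norm_natCast]
  have hCn := hC n
  have hC₀ : 0 ≤ C := (norm_nonneg _).trans (hC 0)
  gcongr

theorem hasDerivAt_tsum_mul_pow (hC : ∀ n, ‖a n‖ ≤ C) (hz : ‖z‖ < 1) :
    HasDerivAt (fun w => ∑' n, a n * w ^ n) (∑' n, a n * (n * z ^ (n - 1))) z := by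
  obtain ⟨r, hzr, hr⟩ := exists_between hz
  have hr₀ : 0 ≤ r := (norm_nonneg z).trans hzr.le
  refine hasDerivAt_tsum_of_isPreconnected
    ((summable_nat_mul_pow_pred (by rwa [Real.norm_of_nonneg hr₀])).mul_left C)
    isOpen_ball (convex_ball 0 r).isPreconnected
    (fun n w _ => (hasDerivAt_pow n w).const_mul (a n))
    (fun n w hw => norm_mul_nat_mul_pow_pred_le hC (mem_ball_zero_iff.mp hw).le n)
    (mem_ball_zero_iff.mpr hzr) (summable_norm_mul_pow_of_norm_le hC hz).of_norm
    (mem_ball_zero_iff.mpr hzr)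

theorem hasSum_mul_nat_mul_pow_pred (hC : ∀ n, ‖a n‖ ≤ C) (hz : ‖z‖ < 1) :
    HasSum (fun n => a n * (n * z ^ (n - 1))) (∑' n, a n * (n * z ^ (n - 1))) := by
  refine (Summable.of_norm_bounded ((summable_nat_mul_pow_pred ?_).mul_left C)
    (norm_mul_nat_mul_pow_pred_le hC le_rfl)).hasSum
  rwa [norm_norm]

theorem hasSum_succ_mul_mul_pow (hC : ∀ n, ‖a n‖ ≤ C) (hz : ‖z‖ < 1) :
    HasSum (fun n => (n + 1) * a (n + 1) * z ^ n) (∑' n, a n * (n * z ^ (n - 1))) := by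
  have h := (hasSum_nat_add_iff' (f := fun n => a n * (n * z ^ (n - 1))) 1).mpr
    (hasSum_mul_nat_mul_pow_pred hC hz)
  rw [sum_range_one, Nat.cast_zero, zero_mul, mul_zero, sub_zero] at h
  refine h.congr_fun fun n => ?_
  push_cast
  ring

theorem hasSum_nat_mul_mul_pow (hC : ∀ n, ‖a n‖ ≤ C) (hz : ‖z‖ < 1) :
    HasSum (fun n => n * a n * z ^ n) (z * ∑' n, a n * (n * z ^ (n - 1))) := by
  refine ((hasSum_mul_nat_mul_pow_pred hC hz).mul_left z).congr_fun fun n => ?_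
  rcases eq_or_ne n 0 with rfl | hn
  · simp
  · rw [← mul_pow_sub_one hn]; ring

end PowerSeries

section Balance

variable {lam th : ℝ} {g ρ : ℕ → ℝ}

theorem sum_range_succ_mul_eq_sum_Icc (hg0 : g 0 = 0) (n : ℕ) :
    ∑ k ∈ range (n + 1), g k * ρ (n - k) = ∑ i ∈ Icc 1 n, g i * ρ (n - i) := by
  rw [range_eq_Ico, sum_eq_sum_Ico_succ_bot n.succ_pos, hg0, zero_mul, zero_add]
  rfl

theorem balance_mul_pow (hg0 : g 0 = 0) (hbal0 : 0 = -lam * ρ 0 + th * ρ 1)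
    (hbal : ∀ n : ℕ, 1 ≤ n →
      0 = -(lam + (n : ℝ) * th) * ρ n + ((n : ℝ) + 1) * th * ρ (n + 1) +
        lam * ∑ i ∈ Icc 1 n, g i * ρ (n - i)) (z : ℝ) (n : ℕ) :
    lam * (ρ n * z ^ n) + th * (n * ρ n * z ^ n) =
      th * ((n + 1) * ρ (n + 1) * z ^ n) +
        lam * ∑ k ∈ range (n + 1), g k * z ^ k * (ρ (n - k) * z ^ (n - k)) := by
  have hconv : ∑ k ∈ range (n + 1), g k * z ^ k * (ρ (n - k) * z ^ (n - k)) =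
      (∑ i ∈ Icc 1 n, g i * ρ (n - i)) * z ^ n := by
    rw [← sum_range_succ_mul_eq_sum_Icc hg0, sum_mul]
    refine sum_congr rfl fun k hk => ?_
    rw [← pow_mul_pow_sub z (mem_range_succ_iff.mp hk)]
    ring
  rw [hconv]
  rcases eq_or_ne n 0 with rfl | hn
  · simp only [Icc_eq_empty_of_lt zero_lt_one, sum_empty]
    linear_combination hbal0
  · linear_combination z ^ n * hbal n (Nat.one_le_iff_ne_zero.mpr hn)

end Balance

theorem orderbook_stationary_generating_function_ode_general
    (lam th : ℝ)
    (g ρ : ℕ → ℝ) (hg0 : g 0 = 0) (hgsum : HasSum g 1)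
    (hρsum : Summable ρ)
    (hbal0 : 0 = -lam * ρ 0 + th * ρ 1)
    (hbal : ∀ n : ℕ, 1 ≤ n →
      0 = -(lam + (n : ℝ) * th) * ρ n + ((n : ℝ) + 1) * th * ρ (n + 1) +
        lam * ∑ i ∈ Finset.Icc 1 n, g i * ρ (n - i)) :
    ∀ z ∈ Set.Ico (0 : ℝ) 1,
      DifferentiableAt ℝ (fun w : ℝ => ∑' n : ℕ, ρ n * w ^ n) z ∧
        th * (1 - z) * deriv (fun w : ℝ => ∑' n : ℕ, ρ n * w ^ n) z =
          lam * (1 - ∑' n : ℕ, g n * z ^ n) * ∑' n : ℕ, ρ n * z ^ n := by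
  rintro z ⟨hz₀, hz₁⟩
  have hz : ‖z‖ < 1 := by rwa [Real.norm_of_nonneg hz₀]
  obtain ⟨C, hC⟩ := exists_norm_le_of_cauchySeq hρsum.hasSum.tendsto_sum_nat.cauchySeq
  obtain ⟨D, hD⟩ := exists_norm_le_of_cauchySeq hgsum.tendsto_sum_nat.cauchySeq
  have hderiv := hasDerivAt_tsum_mul_pow hC hz
  refine ⟨hderiv.differentiableAt, ?_⟩
  rw [hderiv.deriv]
  have hρz := summable_norm_mul_pow_of_norm_le hC hz
  have hgz := summable_norm_mul_pow_of_norm_le hD hz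
  have lhs := (hρz.of_norm.hasSum.mul_left lam).add ((hasSum_nat_mul_mul_pow hC hz).mul_left th)
  have rhs := ((hasSum_succ_mul_mul_pow hC hz).mul_left th).add
    ((hasSum_sum_range_mul_of_summable_norm hgz hρz).mul_left lam)
  have := lhs.unique (rhs.congr_fun (balance_mul_pow hg0 hbal0 hbal z))
  linear_combination -this

/-- If `(ρ_n)` is a nonnegative summable sequence satisfying the
balance equations of the queue with limit-order arrival rate `λ`, order-size
distribution `(g_n)_{n≥1}` and per-share cancellation rate `θ`, then its generating
function `ψ(z) = Σ ρ_n z^n` is differentiable on `[0,1)` and satisfies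
`θ(1-z)ψ'(z) = λ(1-G(z))ψ(z)`, where `G(z) = Σ_{n≥1} g_n z^n`. -/
theorem orderbook_stationary_generating_function_ode
    (lam th : ℝ) (hlam : 0 < lam) (hth : 0 < th)
    (g ρ : ℕ → ℝ) (hg0 : g 0 = 0) (hgnn : ∀ n, 0 ≤ g n) (hgsum : HasSum g 1)
    (hρnn : ∀ n, 0 ≤ ρ n) (hρsum : Summable ρ)
    (hbal0 : 0 = -lam * ρ 0 + th * ρ 1)
    (hbal : ∀ n : ℕ, 1 ≤ n →
      0 = -(lam + (n : ℝ) * th) * ρ n + ((n : ℝ) + 1) * th * ρ (n + 1) +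
        lam * ∑ i ∈ Finset.Icc 1 n, g i * ρ (n - i)) :
    ∀ z ∈ Set.Ico (0 : ℝ) 1,
      DifferentiableAt ℝ (fun w : ℝ => ∑' n : ℕ, ρ n * w ^ n) z ∧
        th * (1 - z) * deriv (fun w : ℝ => ∑' n : ℕ, ρ n * w ^ n) z =
          lam * (1 - ∑' n : ℕ, g n * z ^ n) * ∑' n : ℕ, ρ n * z ^ n :=
  orderbook_stationary_generating_function_ode_general lam th g ρ hg0 hgsum hρsum hbal0 hbal
end

section
/- Let λ > 0, θ > 0, let (g_n)_{n≥1} be nonnegative reals with Σ_{n≥1} g_n = 1 such that ∫_0^1 (1−G(u))/(1−u) du < ∞, where G(z) = Σ_{n=1}^∞ g_n z^n. If (ρ_n)_{n≥0} and (ρ'_n)_{n≥0} are two nonnegative sequences, each summing to 1 and each satisfying the balance equations 0 = −λρ_0 + θρ_1 and 0 = −(λ+nθ)ρ_n + (n+1)θρ_{n+1} + λΣ_{i=1}^n g_i ρ_{n−i} for n ≥ 1, then ρ_n = ρ'_n for all n. -/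
/-!
The balance equations form a linear recursion that determines `ρ (n + 1)` from
`ρ 0, …, ρ n`, since its leading coefficient `(n + 1) θ` never vanishes. Hence the
solutions form a space of dimension at most one, on which evaluation at `0` is
injective, and the normalisation `∑ ρ n = 1` singles out one element of it.
-/

open Finset

theorem eq_of_hasSum_one_of_eval_injective {𝕜 ι : Type*} [Field 𝕜] [TopologicalSpace 𝕜]
    [IsTopologicalRing 𝕜] [T2Space 𝕜] {V : Submodule 𝕜 (ι → 𝕜)} (i₀ : ι)
    (hV : ∀ σ ∈ V, σ i₀ = 0 → σ = 0) {ρ ρ' : ι → 𝕜} (hρ : ρ ∈ V) (hρ' : ρ' ∈ V)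
    (hsum : HasSum ρ 1) (hsum' : HasSum ρ' 1) : ρ = ρ' := by
  have hρ₀ : ρ i₀ ≠ 0 := fun h => by
    rw [hV ρ hρ h] at hsum
    exact one_ne_zero (hsum.unique hasSum_zero)
  have hcross : ρ' i₀ • ρ - ρ i₀ • ρ' = 0 :=
    hV _ (V.sub_mem (V.smul_mem _ hρ) (V.smul_mem _ hρ')) (by simp [mul_comm])
  have hdiff : HasSum (ρ' i₀ • ρ - ρ i₀ • ρ') (ρ' i₀ - ρ i₀) := by
    simpa only [Pi.sub_def, Pi.smul_def, smul_eq_mul, mul_one] using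
      (hsum.const_smul (ρ' i₀)).sub (hsum'.const_smul (ρ i₀))
  have hρ₀' : ρ' i₀ = ρ i₀ := sub_eq_zero.mp (hdiff.unique (hcross ▸ hasSum_zero))
  rw [hρ₀', ← smul_sub, smul_eq_zero] at hcross
  exact sub_eq_zero.mp (hcross.resolve_left hρ₀)

namespace OrderBook

variable {lam th : ℝ} {g : ℕ → ℝ}

/-- The sum over `Icc 1 0` is empty, so the component `0` is the boundary equation
`-λ σ₀ + θ σ₁` and the kernel is exactly the set of solutions of the balance equations. -/
def balanceOperator (lam th : ℝ) (g : ℕ → ℝ) : (ℕ → ℝ) →ₗ[ℝ] (ℕ → ℝ) where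
  toFun σ n := -(lam + n * th) * σ n + (n + 1) * th * σ (n + 1) +
    lam * ∑ i ∈ Icc 1 n, g i * σ (n - i)
  map_add' σ τ := by
    funext n
    simp only [Pi.add_apply, mul_add, sum_add_distrib]
    ring
  map_smul' c σ := by
    funext n
    simp only [Pi.smul_apply, smul_eq_mul, RingHom.id_apply, mul_left_comm (g _) c, ← mul_sum]
    ring

theorem mem_ker_balanceOperator {σ : ℕ → ℝ} (h0 : 0 = -lam * σ 0 + th * σ 1)
    (h : ∀ n : ℕ, 1 ≤ n → 0 = -(lam + (n : ℝ) * th) * σ n + ((n : ℝ) + 1) * th * σ (n + 1) +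
      lam * ∑ i ∈ Icc 1 n, g i * σ (n - i)) :
    σ ∈ LinearMap.ker (balanceOperator lam th g) := by
  refine LinearMap.mem_ker.mpr (funext fun n => ?_)
  rcases Nat.eq_zero_or_pos n with rfl | hn
  · simpa [balanceOperator] using h0.symm
  · exact (h n hn).symm

theorem eq_zero_of_mem_ker_balanceOperator (hth : th ≠ 0) {σ : ℕ → ℝ}
    (hσ : σ ∈ LinearMap.ker (balanceOperator lam th g)) (h0 : σ 0 = 0) : σ = 0 := by
  suffices h : ∀ n, ∀ k ≤ n, σ k = 0 from funext fun n => h n n le_rfl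
  intro n
  induction n with
  | zero => simpa using h0
  | succ n ih =>
    have hbal : (n + 1) * th * σ (n + 1) = 0 := by
      have hn := congrFun (LinearMap.mem_ker.mp hσ) n
      have hsum : ∑ i ∈ Icc 1 n, g i * σ (n - i) = 0 :=
        sum_eq_zero fun i _ => by rw [ih (n - i) (Nat.sub_le n i), mul_zero]
      simpa [balanceOperator, ih n le_rfl, hsum] using hn
    have hσ : σ (n + 1) = 0 :=
      (mul_eq_zero.mp hbal).resolve_left (mul_ne_zero (by positivity) hth)
    intro k hk
    rcases Nat.le_succ_iff.mp hk with hk | rfl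
    exacts [ih k hk, hσ]

end OrderBook

open OrderBook in
theorem orderbook_stationary_distribution_unique_general
    (lam th : ℝ) (hth : 0 < th)
    (g : ℕ → ℝ)
    (ρ ρ' : ℕ → ℝ)
    (hρsum : HasSum ρ 1)
    (hbal0 : 0 = -lam * ρ 0 + th * ρ 1)
    (hbal : ∀ n : ℕ, 1 ≤ n →
      0 = -(lam + (n : ℝ) * th) * ρ n + ((n : ℝ) + 1) * th * ρ (n + 1) +
        lam * ∑ i ∈ Finset.Icc 1 n, g i * ρ (n - i))
    (hρ'sum : HasSum ρ' 1)
    (hbal0' : 0 = -lam * ρ' 0 + th * ρ' 1)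
    (hbal' : ∀ n : ℕ, 1 ≤ n →
      0 = -(lam + (n : ℝ) * th) * ρ' n + ((n : ℝ) + 1) * th * ρ' (n + 1) +
        lam * ∑ i ∈ Finset.Icc 1 n, g i * ρ' (n - i)) :
    ∀ n : ℕ, ρ n = ρ' n :=
  congrFun <| eq_of_hasSum_one_of_eval_injective 0
    (fun _ hσ => eq_zero_of_mem_ker_balanceOperator hth.ne' hσ)
    (mem_ker_balanceOperator hbal0 hbal) (mem_ker_balanceOperator hbal0' hbal') hρsum hρ'sum

/-- Uniqueness of the stationary probability distribution of the
order-book queue: two nonnegative sequences summing to 1 which both satisfy the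
balance equations (with `∫_0^1 (1-G(u))/(1-u) du` finite) coincide. -/
theorem orderbook_stationary_distribution_unique
    (lam th : ℝ) (hlam : 0 < lam) (hth : 0 < th)
    (g : ℕ → ℝ) (hg0 : g 0 = 0) (hgnn : ∀ n, 0 ≤ g n) (hgsum : HasSum g 1)
    (hI : MeasureTheory.IntegrableOn
      (fun u : ℝ => (1 - ∑' n : ℕ, g n * u ^ n) / (1 - u)) (Set.Ioo 0 1))
    (ρ ρ' : ℕ → ℝ)
    (hρnn : ∀ n, 0 ≤ ρ n) (hρsum : HasSum ρ 1)
    (hbal0 : 0 = -lam * ρ 0 + th * ρ 1)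
    (hbal : ∀ n : ℕ, 1 ≤ n →
      0 = -(lam + (n : ℝ) * th) * ρ n + ((n : ℝ) + 1) * th * ρ (n + 1) +
        lam * ∑ i ∈ Finset.Icc 1 n, g i * ρ (n - i))
    (hρ'nn : ∀ n, 0 ≤ ρ' n) (hρ'sum : HasSum ρ' 1)
    (hbal0' : 0 = -lam * ρ' 0 + th * ρ' 1)
    (hbal' : ∀ n : ℕ, 1 ≤ n →
      0 = -(lam + (n : ℝ) * th) * ρ' n + ((n : ℝ) + 1) * th * ρ' (n + 1) +
        lam * ∑ i ∈ Finset.Icc 1 n, g i * ρ' (n - i)) :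
    ∀ n : ℕ, ρ n = ρ' n :=
  orderbook_stationary_distribution_unique_general lam th hth g ρ ρ' hρsum hbal0 hbal hρ'sum hbal0'
    hbal'
end

section
/- Fix λ > 0, θ > 0, 0 < q < 1, and a natural number i, and set G(z) = qz/(1−(1−q)z). Define, for z ∈ [0,1) and t ≥ 0, φ_i(z,t) = [1 − (1−z)e^{−θt}]^i · [ (q + (1−q)(1−z)e^{−θt}) / (1 − (1−q)z) ]^{λ/(θ(1−q))}. Then φ_i(z,0) = z^i for all z ∈ [0,1), and for all z ∈ [0,1) and t > 0, ∂φ_i/∂t(z,t) = θ(1−z) ∂φ_i/∂z(z,t) − λ(1−G(z)) φ_i(z,t). -/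
/-!
Along the characteristics `(1 - z) e^{-θt} = const` of the transport operator
`∂_t - θ(1 - z)∂_z`, the factors `1 - (1 - z)e^{-θt}` and `q + (1 - q)(1 - z)e^{-θt}` of `φ`
are constant, so on the logarithmic derivative of `φ` that operator only sees the factor
`(1 - (1 - q)z)^{-λ/(θ(1-q))}`, which contributes `-λ(1 - z)/(1 - (1 - q)z) = -λ(1 - G(z))`.
-/

open Real

theorem HasDerivAt.pow_mul_div_rpow {a n d : ℝ → ℝ} {a' n' d' x : ℝ} (k : ℕ) (α : ℝ)
    (ha : HasDerivAt a a' x) (hn : HasDerivAt n n' x) (hd : HasDerivAt d d' x)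
    (ha0 : a x ≠ 0) (hn0 : n x ≠ 0) (hd0 : d x ≠ 0) :
    HasDerivAt (fun y => a y ^ k * (n y / d y) ^ α)
      (a x ^ k * (n x / d x) ^ α * (k * a' / a x + α * (n' / n x - d' / d x))) x := by
  have hB : n x / d x ≠ 0 := div_ne_zero hn0 hd0
  refine ((ha.pow k).mul ((hn.div hd hd0).rpow_const (p := α) (Or.inl hB))).congr_deriv ?_
  have hpow : (k : ℝ) * a x ^ (k - 1) = k * a x ^ k / a x := by
    rcases k with _ | k
    · simp
    · rw [pow_succ, mul_div_assoc, mul_div_cancel_right₀ _ ha0, Nat.add_sub_cancel]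
  rw [Pi.div_apply, Pi.pow_apply, Real.rpow_sub_one hB, hpow]
  field_simp

noncomputable def orderBookGF (θ q α : ℝ) (i : ℕ) (z t : ℝ) : ℝ :=
  (1 - (1 - z) * exp (-θ * t)) ^ i *
    ((q + (1 - q) * (1 - z) * exp (-θ * t)) / (1 - (1 - q) * z)) ^ α

section Derivatives

variable {θ q : ℝ} (α : ℝ) (i : ℕ) {z t : ℝ}

theorem hasDerivAt_orderBookGF_time (hA : 1 - (1 - z) * exp (-θ * t) ≠ 0)
    (hN : q + (1 - q) * (1 - z) * exp (-θ * t) ≠ 0) (hD : 1 - (1 - q) * z ≠ 0) :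
    HasDerivAt (fun s => orderBookGF θ q α i z s)
      (orderBookGF θ q α i z t *
        (i * θ * ((1 - z) * exp (-θ * t)) / (1 - (1 - z) * exp (-θ * t)) -
          α * θ * ((1 - q) * (1 - z) * exp (-θ * t)) /
            (q + (1 - q) * (1 - z) * exp (-θ * t)))) t := by
  have hE : HasDerivAt (fun s => exp (-θ * s)) (-θ * exp (-θ * t)) t := by
    simpa [mul_comm] using ((hasDerivAt_id' t).const_mul (-θ)).exp
  refine (HasDerivAt.pow_mul_div_rpow i α ((hE.const_mul (1 - z)).const_sub 1)
    ((hE.const_mul ((1 - q) * (1 - z))).const_add q) (hasDerivAt_const t _)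
    hA hN hD).congr_deriv ?_
  simp only [orderBookGF]
  ring

theorem hasDerivAt_orderBookGF_space (hA : 1 - (1 - z) * exp (-θ * t) ≠ 0)
    (hN : q + (1 - q) * (1 - z) * exp (-θ * t) ≠ 0) (hD : 1 - (1 - q) * z ≠ 0) :
    HasDerivAt (fun w => orderBookGF θ q α i w t)
      (orderBookGF θ q α i z t *
        (i * exp (-θ * t) / (1 - (1 - z) * exp (-θ * t)) -
          α * (1 - q) * exp (-θ * t) / (q + (1 - q) * (1 - z) * exp (-θ * t)) +
          α * (1 - q) / (1 - (1 - q) * z))) z := by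
  have hL : HasDerivAt (fun w : ℝ => 1 - w) (-1) z := by
    simpa using (hasDerivAt_id' z).const_sub 1
  refine (HasDerivAt.pow_mul_div_rpow i α ((hL.mul_const _).const_sub 1)
    ((hL.const_mul (1 - q)).mul_const _ |>.const_add q)
    (((hasDerivAt_id' z).const_mul (1 - q)).const_sub 1) hA hN hD).congr_deriv ?_
  simp only [orderBookGF]
  ring

end Derivatives

theorem orderbook_generating_function_pde_geometric_general
    (lam th q : ℝ) (hth : 0 < th) (hq0 : 0 < q) (hq1 : q < 1)
    (i : ℕ) :
    let φ : ℝ → ℝ → ℝ := fun z t =>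
      (1 - (1 - z) * Real.exp (-th * t)) ^ i *
        ((q + (1 - q) * (1 - z) * Real.exp (-th * t)) / (1 - (1 - q) * z)) ^
          (lam / (th * (1 - q)))
    (∀ z ∈ Set.Ico (0 : ℝ) 1, φ z 0 = z ^ i) ∧
      ∀ z ∈ Set.Ico (0 : ℝ) 1, ∀ t : ℝ, 0 < t →
        deriv (fun s => φ z s) t =
          th * (1 - z) * deriv (fun w => φ w t) z -
            lam * (1 - q * z / (1 - (1 - q) * z)) * φ z t := by
  intro φ
  have hq : 0 < 1 - q := sub_pos.2 hq1
  refine ⟨fun z ⟨hz0, hz1⟩ => ?_, fun z ⟨hz0, hz1⟩ t ht => ?_⟩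
  · have hD : 1 - (1 - q) * z ≠ 0 := by nlinarith
    have hnum : q + (1 - q) * (1 - z) = 1 - (1 - q) * z := by ring
    simp [φ, hnum, div_self hD]
  · have hE : exp (-th * t) < 1 := exp_lt_one_iff.2 (by nlinarith)
    have hu : 0 ≤ (1 - z) * exp (-th * t) := by positivity
    have hA : 1 - (1 - z) * exp (-th * t) ≠ 0 := by nlinarith
    have hN : q + (1 - q) * (1 - z) * exp (-th * t) ≠ 0 := by nlinarith
    have hD : 1 - (1 - q) * z ≠ 0 := by nlinarith
    show deriv (fun s => orderBookGF th q _ i z s) t =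
      th * (1 - z) * deriv (fun w => orderBookGF th q _ i w t) z -
        lam * (1 - q * z / (1 - (1 - q) * z)) * orderBookGF th q _ i z t
    rw [(hasDerivAt_orderBookGF_time _ i hA hN hD).deriv,
      (hasDerivAt_orderBookGF_space _ i hA hN hD).deriv]
    field_simp
    ring

/-- In the order-book model with geometric order sizes
(parameter `q`, generating function `G(z) = qz/(1-(1-q)z)`), arrival rate `λ` and
cancellation rate `θ`, the function
`φ_i(z,t) = (1-(1-z)e^{-θt})^i ((q+(1-q)(1-z)e^{-θt})/(1-(1-q)z))^{λ/(θ(1-q))}`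
satisfies `φ_i(z,0) = z^i` and the PDE `∂φ/∂t = θ(1-z)∂φ/∂z - λ(1-G(z))φ` on
`[0,1) × (0,∞)`. -/
theorem orderbook_generating_function_pde_geometric
    (lam th q : ℝ) (hlam : 0 < lam) (hth : 0 < th) (hq0 : 0 < q) (hq1 : q < 1)
    (i : ℕ) :
    let φ : ℝ → ℝ → ℝ := fun z t =>
      (1 - (1 - z) * Real.exp (-th * t)) ^ i *
        ((q + (1 - q) * (1 - z) * Real.exp (-th * t)) / (1 - (1 - q) * z)) ^
          (lam / (th * (1 - q)))
    (∀ z ∈ Set.Ico (0 : ℝ) 1, φ z 0 = z ^ i) ∧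
      ∀ z ∈ Set.Ico (0 : ℝ) 1, ∀ t : ℝ, 0 < t →
        deriv (fun s => φ z s) t =
          th * (1 - z) * deriv (fun w => φ w t) z -
            lam * (1 - q * z / (1 - (1 - q) * z)) * φ z t :=
  orderbook_generating_function_pde_geometric_general lam th q hth hq0 hq1 i
end

section
/- Let λ > 0, μ > 0, θ > 0, let (g_n)_{n≥1} be nonnegative reals with Σ_{n≥1} g_n = 1 such that H(z) = (1−G(z))/(1−z), with G(z) = Σ g_n z^n, satisfies ∫_0^1 H(v) dv < ∞. Let (π_n)_{n≥0} be a nonnegative sequence with Σ_{n≥0} π_n = 1 satisfying: 0 = −λπ_0 + (μ+θ)π_1, and for n ≥ 1, 0 = −(λ+μ+nθ)π_n + (μ+(n+1)θ)π_{n+1} + λ Σ_{i=1}^{n} g_i π_{n−i}. Then π_0 = [ (μ/θ) ∫_0^1 u^{μ/θ − 1} exp( (λ/θ) ∫_u^1 H(v) dv ) du ]^{−1}. -/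
/-!
Write `P(z) = ∑ πₙ zⁿ`, `G(z) = ∑ gₙ zⁿ`, `H = (1 - G)/(1 - z)` and `p = μ/θ`; summable
coefficients are bounded, so these power series are differentiable on `(-1, 1)`. Multiplying the
balance equations by `zⁿ` and summing gives `θ P' = λ H P - μ Q` where `P = π₀ + z Q`. For
`F(u) = exp((λ/θ) ∫_u^1 H)` we have `F' = -(λ/θ) H F`, so the derivative of `u^p F(u) P(u)` is
`p π₀ u^(p-1) F(u)`. This function tends to `0` at `0⁺` and, by Abel's theorem, to
`F(1) P(1⁻) = 1` at `1⁻`; hence `p π₀ ∫_0^1 u^(p-1) F(u) du = 1`.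
-/

open Filter Topology Set Finset MeasureTheory

namespace Type0Queue

noncomputable def genFun (c : ℕ → ℝ) (z : ℝ) : ℝ := ∑' n, c n * z ^ n

lemma exists_abs_le_of_summable {c : ℕ → ℝ} (hc : Summable c) : ∃ C, ∀ n, |c n| ≤ C := by
  obtain ⟨C, hC⟩ := isBounded_iff_forall_norm_le.1
    (Metric.isBounded_range_of_tendsto c hc.tendsto_atTop_zero)
  exact ⟨C, fun n => hC _ (mem_range_self n)⟩

lemma summable_succ_mul_geometric {r : ℝ} (hr : |r| < 1) :
    Summable fun n : ℕ => ((n : ℝ) + 1) * r ^ n := by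
  simpa using summable_choose_mul_geometric_of_norm_lt_one (R := ℝ) 1 hr

lemma summable_norm_mul_pow {c : ℕ → ℝ} {C z : ℝ} (hc : ∀ n, |c n| ≤ C * (n + 1))
    (hz : |z| < 1) : Summable fun n => ‖c n * z ^ n‖ := by
  refine ((summable_succ_mul_geometric (r := |z|) (by rwa [abs_abs])).mul_left C).of_nonneg_of_le
    (fun n => norm_nonneg _) fun n => ?_
  rw [norm_mul, norm_pow, Real.norm_eq_abs, Real.norm_eq_abs, ← mul_assoc]
  exact mul_le_mul_of_nonneg_right (hc n) (by positivity)

lemma abs_le_mul_succ {c : ℕ → ℝ} {C : ℝ} (hc : ∀ n, |c n| ≤ C) (n : ℕ) :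
    |c n| ≤ C * (n + 1) :=
  (hc n).trans <| le_mul_of_one_le_right ((abs_nonneg _).trans (hc 0)) <| by
    linarith [n.cast_nonneg (α := ℝ)]

lemma abs_succ_mul_le {c : ℕ → ℝ} {C : ℝ} (hc : ∀ n, |c n| ≤ C) (n : ℕ) :
    |((n : ℝ) + 1) * c (n + 1)| ≤ C * (n + 1) := by
  rw [abs_mul, abs_of_pos (by positivity), mul_comm]
  exact mul_le_mul_of_nonneg_right (hc _) (by positivity)

lemma hasSum_genFun {c : ℕ → ℝ} {C z : ℝ} (hc : ∀ n, |c n| ≤ C * (n + 1)) (hz : |z| < 1) :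
    HasSum (fun n => c n * z ^ n) (genFun c z) :=
  (summable_norm_mul_pow hc hz).of_norm.hasSum

lemma hasSum_mul_pow_of_succ {c : ℕ → ℝ} {z s : ℝ} (h : HasSum (fun n => c (n + 1) * z ^ n) s) :
    HasSum (fun n => c n * z ^ n) (c 0 + z * s) := by
  have := (hasSum_nat_add_iff (f := fun n => c n * z ^ n) 1).1 <|
    (h.mul_left z).congr_fun fun n => by ring
  simpa [add_comm] using this

lemma genFun_eq_add_mul_genFun_succ {c : ℕ → ℝ} {C z : ℝ} (hc : ∀ n, |c n| ≤ C) (hz : |z| < 1) :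
    genFun c z = c 0 + z * genFun (fun n => c (n + 1)) z :=
  (hasSum_genFun (abs_le_mul_succ hc) hz).unique
    (hasSum_mul_pow_of_succ (hasSum_genFun (abs_le_mul_succ fun n => hc (n + 1)) hz))

lemma hasDerivAt_genFun {c : ℕ → ℝ} {C z : ℝ} (hc : ∀ n, |c n| ≤ C) (hz : |z| < 1) :
    HasDerivAt (genFun c) (genFun (fun n => (n + 1) * c (n + 1)) z) z := by
  obtain ⟨r, hzr, hr1⟩ := exists_between hz
  have hC : 0 ≤ C := (abs_nonneg _).trans (hc 0)
  have hu : Summable fun n : ℕ => C * (n * r ^ (n - 1)) := by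
    refine (summable_nat_add_iff 1).1 <|
      ((summable_succ_mul_geometric (r := r) ?_).mul_left C).congr fun n => by simp
    rw [abs_of_pos ((abs_nonneg z).trans_lt hzr)]; exact hr1
  have hderiv := hasDerivAt_tsum_of_isPreconnected hu isOpen_Ioo (convex_Ioo (-r) r).isPreconnected
    (fun n y _ => (hasDerivAt_pow n y).const_mul (c n)) (fun n y hy => ?_)
    (show (0 : ℝ) ∈ Ioo (-r) r from ⟨by linarith [abs_nonneg z], by linarith [abs_nonneg z]⟩)
    (hasSum_genFun (abs_le_mul_succ hc) (by simp)).summable (abs_lt.1 hzr)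
  · have hD : HasSum (fun n => c n * (n * z ^ (n - 1)))
        (genFun (fun n => (n + 1) * c (n + 1)) z) := by
      refine (hasSum_nat_add_iff' 1).1 ?_
      simpa [Nat.add_sub_cancel, mul_left_comm, mul_comm] using
        hasSum_genFun (abs_succ_mul_le hc) hz
    rw [← hD.tsum_eq]
    exact hderiv
  · rw [norm_mul, norm_mul, norm_pow, Real.norm_eq_abs, Real.norm_eq_abs, Real.norm_eq_abs,
      Nat.abs_cast]
    exact mul_le_mul (hc n) (by gcongr; exact (abs_lt.2 hy).le) (by positivity) hC

lemma hasSum_genFun_mul {a b : ℕ → ℝ} {A B z : ℝ} (ha : ∀ n, |a n| ≤ A) (hb : ∀ n, |b n| ≤ B)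
    (hz : |z| < 1) :
    HasSum (fun n => (∑ k ∈ range (n + 1), a k * b (n - k)) * z ^ n)
      (genFun a z * genFun b z) := by
  refine (hasSum_sum_range_mul_of_summable_norm (summable_norm_mul_pow (abs_le_mul_succ ha) hz)
    (summable_norm_mul_pow (abs_le_mul_succ hb) hz)).congr_fun fun n => ?_
  rw [sum_mul]
  refine sum_congr rfl fun k hk => ?_
  rw [← pow_sub_mul_pow z (Nat.le_of_lt_succ (mem_range.1 hk))]
  ring

lemma sum_range_succ_eq_add_sum_Icc_one (f : ℕ → ℝ) (n : ℕ) :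
    ∑ k ∈ range (n + 1), f k = f 0 + ∑ k ∈ Icc 1 n, f k := by
  rw [range_eq_Ico, sum_eq_sum_Ico_succ_bot n.succ_pos, zero_add, Nat.succ_eq_add_one,
    Finset.Ico_add_one_right_eq_Icc]

-- The boundary equation at `n = 0` lacks the outflow `μ π₀` of the generic one.
lemma balance_eq_of_stationary {lam mu th : ℝ} {g π : ℕ → ℝ} (hg0 : g 0 = 0)
    (hbal0 : 0 = -lam * π 0 + (mu + th) * π 1)
    (hbal : ∀ n : ℕ, 1 ≤ n →
      0 = -(lam + mu + (n : ℝ) * th) * π n + (mu + ((n : ℝ) + 1) * th) * π (n + 1) +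
        lam * ∑ i ∈ Icc 1 n, g i * π (n - i))
    (n : ℕ) :
    (mu + ((n : ℝ) + 1) * th) * π (n + 1) + lam * ∑ k ∈ range (n + 1), g k * π (n - k)
      + (if n = 0 then mu * π 0 else 0) = (lam + mu + n * th) * π n := by
  rw [sum_range_succ_eq_add_sum_Icc_one, hg0, zero_mul, zero_add]
  rcases n with _ | n
  · simp only [CharP.cast_eq_zero, zero_add, one_mul, Finset.Icc_eq_empty_of_lt one_pos,
      sum_empty, mul_zero, add_zero, ite_true, zero_mul]
    linear_combination -hbal0
  · rw [if_neg n.succ_ne_zero, add_zero]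
    linear_combination -hbal (n + 1) (Nat.le_add_left 1 n)

lemma genFun_ode_of_balance {lam mu th Cg Cπ z : ℝ} {g π : ℕ → ℝ} (hg0 : g 0 = 0)
    (hg : ∀ n, |g n| ≤ Cg) (hπ : ∀ n, |π n| ≤ Cπ)
    (hbal0 : 0 = -lam * π 0 + (mu + th) * π 1)
    (hbal : ∀ n : ℕ, 1 ≤ n →
      0 = -(lam + mu + (n : ℝ) * th) * π n + (mu + ((n : ℝ) + 1) * th) * π (n + 1) +
        lam * ∑ i ∈ Icc 1 n, g i * π (n - i))
    (hz : |z| < 1) :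
    th * genFun (fun n => (n + 1) * π (n + 1)) z
      = lam * ((1 - genFun g z) / (1 - z)) * genFun π z - mu * genFun (fun n => π (n + 1)) z := by
  have hP := hasSum_genFun (abs_le_mul_succ hπ) hz
  have hQ := hasSum_genFun (abs_le_mul_succ fun n => hπ (n + 1)) hz
  have hD := hasSum_genFun (abs_succ_mul_le hπ) hz
  have hnP : HasSum (fun n => (n * π n) * z ^ n)
      (z * genFun (fun n => (n + 1) * π (n + 1)) z) := by
    simpa using hasSum_mul_pow_of_succ (c := fun n => n * π n) (by simpa using hD)
  have hshift := genFun_eq_add_mul_genFun_succ hπ hz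
  have hsum := ((((hQ.mul_left mu).add (hD.mul_left th)).add
    ((hasSum_genFun_mul hg hπ hz).mul_left lam)).add (hasSum_ite_eq 0 (mu * π 0))).unique
    ((((hP.mul_left lam).add (hP.mul_left mu)).add (hnP.mul_left th)).congr_fun fun n => ?_)
  · have hz1 : 1 - z ≠ 0 := sub_ne_zero.2 (abs_lt.1 hz).2.ne'
    field_simp
    linear_combination hsum + mu * hshift
  · have h := balance_eq_of_stationary hg0 hbal0 hbal n
    split_ifs at h ⊢ with hn
    · subst hn
      simp only [CharP.cast_eq_zero, pow_zero] at h ⊢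
      linear_combination h
    · linear_combination z ^ n * h

lemma continuousOn_integral_left {H : ℝ → ℝ} {a b : ℝ} (hab : a ≤ b)
    (hint : IntegrableOn H (Ioo a b)) :
    ContinuousOn (fun u => ∫ v in u..b, H v) (Icc a b) := by
  have := intervalIntegral.continuousOn_primitive_interval_left (f := H) (μ := volume)
    (by rwa [Set.uIcc_of_le hab, integrableOn_Icc_iff_integrableOn_Ioo])
  rwa [Set.uIcc_of_le hab] at this

lemma hasDerivAt_integral_left_of_continuousOn {H : ℝ → ℝ} {a b x : ℝ}
    (hint : IntegrableOn H (Ioo a b)) (hcont : ContinuousOn H (Ioo a b)) (hx : x ∈ Ioo a b) :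
    HasDerivAt (fun u => ∫ v in u..b, H v) (-H x) x := by
  refine intervalIntegral.integral_hasDerivAt_left ?_
    (hcont.stronglyMeasurableAtFilter isOpen_Ioo x hx)
    (hcont.continuousAt (Ioo_mem_nhds hx.1 hx.2))
  rw [intervalIntegrable_iff_integrableOn_Ioc_of_le hx.2.le, integrableOn_Ioc_iff_integrableOn_Ioo]
  exact hint.mono_set (Ioo_subset_Ioo_left hx.1.le)

lemma hasDerivAt_rpow_mul_exp_mul {P K : ℝ → ℝ} {x P' h q a lam mu th : ℝ} (hx : 0 < x)
    (hth : th ≠ 0) (hP : HasDerivAt P P' x) (hK : HasDerivAt K (-h) x)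
    (hode : th * P' = lam * h * P x - mu * q) (hPq : P x = a + x * q) :
    HasDerivAt (fun u => u ^ (mu / th) * Real.exp (lam / th * K u) * P u)
      (mu / th * a * (x ^ (mu / th - 1) * Real.exp (lam / th * K x))) x := by
  refine (((Real.hasDerivAt_rpow_const (p := mu / th) (Or.inl hx.ne')).mul
    (hK.const_mul (lam / th)).exp).mul hP).congr_deriv ?_
  have hxp : x ^ (mu / th) = x ^ (mu / th - 1) * x := by
    rw [← Real.rpow_add_one hx.ne']; ring_nf
  have hP' : P' = (lam * h * (a + x * q) - mu * q) / th := by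
    rw [eq_div_iff hth, ← hPq]; linear_combination hode
  simp only [Pi.mul_apply]
  rw [hxp, hPq, hP']
  field_simp
  ring

lemma mul_integral_rpow_mul_eq_of_hasDerivAt {p c : ℝ} {F P : ℝ → ℝ} (hp : 0 < p)
    (hF : ContinuousOn F (Icc 0 1)) (hP0 : ContinuousAt P 0) (hP1 : Tendsto P (𝓝[<] 1) (𝓝 1))
    (hderiv : ∀ x ∈ Ioo (0 : ℝ) 1,
      HasDerivAt (fun u => u ^ p * F u * P u) (c * (x ^ (p - 1) * F x)) x) :
    c * ∫ u in (0 : ℝ)..1, u ^ (p - 1) * F u = F 1 := by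
  have hint : IntervalIntegrable (fun u => c * (u ^ (p - 1) * F u)) volume 0 1 :=
    ((intervalIntegral.intervalIntegrable_rpow' (by linarith)).mul_continuousOn
      (by rwa [Set.uIcc_of_le zero_le_one])).const_mul c
  have hcont : ContinuousOn (fun u => u ^ p * F u) (Icc 0 1) :=
    (Real.continuous_rpow_const hp.le).continuousOn.mul hF
  have h0 : Tendsto (fun u => u ^ p * F u * P u) (𝓝[>] 0) (𝓝 0) := by
    have := ((hcont 0 (left_mem_Icc.2 zero_le_one)).mono_of_mem_nhdsWithin
      (mem_of_superset (Ico_mem_nhdsGT one_pos) Ico_subset_Icc_self)).tendsto.mul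
      (hP0.tendsto.mono_left nhdsWithin_le_nhds)
    simpa [Real.zero_rpow hp.ne'] using this
  have h1 : Tendsto (fun u => u ^ p * F u * P u) (𝓝[<] 1) (𝓝 (F 1)) := by
    have := ((hcont 1 (right_mem_Icc.2 zero_le_one)).mono_of_mem_nhdsWithin
      (mem_of_superset (Ioc_mem_nhdsLT one_pos) Ioc_subset_Icc_self)).tendsto.mul hP1
    simpa using this
  rw [← intervalIntegral.integral_const_mul,
    intervalIntegral.integral_eq_sub_of_hasDerivAt_of_tendsto one_pos hderiv hint h0 h1, sub_zero]

end Type0Queue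

open Type0Queue

theorem type0_pi_zero_formula_general
    (lam mu th : ℝ) (hmu : 0 < mu) (hth : 0 < th)
    (g : ℕ → ℝ) (hg0 : g 0 = 0) (hgsum : HasSum g 1)
    (hH : MeasureTheory.IntegrableOn
      (fun v : ℝ => (1 - ∑' n : ℕ, g n * v ^ n) / (1 - v)) (Set.Ioo 0 1))
    (π : ℕ → ℝ) (hπsum : HasSum π 1)
    (hbal0 : 0 = -lam * π 0 + (mu + th) * π 1)
    (hbal : ∀ n : ℕ, 1 ≤ n →
      0 = -(lam + mu + (n : ℝ) * th) * π n + (mu + ((n : ℝ) + 1) * th) * π (n + 1) +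
        lam * ∑ i ∈ Finset.Icc 1 n, g i * π (n - i)) :
    π 0 = ((mu / th) *
        ∫ u in (0:ℝ)..1,
          u ^ (mu / th - 1) *
            Real.exp ((lam / th) *
              ∫ v in u..1, (1 - ∑' n : ℕ, g n * v ^ n) / (1 - v)))⁻¹ := by
  obtain ⟨Cg, hg⟩ := exists_abs_le_of_summable hgsum.summable
  obtain ⟨Cπ, hπ⟩ := exists_abs_le_of_summable hπsum.summable
  have habs : ∀ x ∈ Ioo (0 : ℝ) 1, |x| < 1 := fun x hx => abs_lt.2 ⟨by linarith [hx.1], hx.2⟩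
  have hHcont : ContinuousOn (fun v : ℝ => (1 - genFun g v) / (1 - v)) (Ioo 0 1) :=
    fun v hv => ((continuousAt_const.sub (hasDerivAt_genFun hg (habs v hv)).continuousAt).div
      (continuousAt_const.sub continuousAt_id) (sub_ne_zero.2 hv.2.ne')).continuousWithinAt
  have hF : ContinuousOn (fun u => Real.exp (lam / th *
      ∫ v in u..1, (1 - genFun g v) / (1 - v))) (Icc 0 1) :=
    Real.continuous_exp.comp_continuousOn
      (continuousOn_const.mul (continuousOn_integral_left zero_le_one hH))
  have key := mul_integral_rpow_mul_eq_of_hasDerivAt (div_pos hmu hth) hF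
    (hasDerivAt_genFun hπ (by simp)).continuousAt
    (Real.tendsto_tsum_powerSeries_nhdsWithin_lt hπsum.tendsto_sum_nat) fun x hx =>
      hasDerivAt_rpow_mul_exp_mul hx.1 hth.ne' (hasDerivAt_genFun hπ (habs x hx))
        (hasDerivAt_integral_left_of_continuousOn hH hHcont hx)
        (genFun_ode_of_balance hg0 hg hπ hbal0 hbal (habs x hx))
        (genFun_eq_add_mul_genFun_succ hπ (habs x hx))
  rw [intervalIntegral.integral_same, mul_zero, Real.exp_zero] at key
  exact eq_inv_of_mul_eq_one_left (by rw [mul_left_comm, ← mul_assoc]; exact key)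

/-- In the Type-0 model of the best quote, if
`H(z) = (1-G(z))/(1-z)` is integrable on `(0,1)` and `(π_n)` is a stationary
probability distribution (nonnegative, summing to 1, satisfying the balance
equations), then
`π_0 = [ (μ/θ) ∫_0^1 u^{μ/θ-1} exp((λ/θ) ∫_u^1 H(v) dv) du ]⁻¹`. -/
theorem type0_pi_zero_formula
    (lam mu th : ℝ) (hlam : 0 < lam) (hmu : 0 < mu) (hth : 0 < th)
    (g : ℕ → ℝ) (hg0 : g 0 = 0) (hgnn : ∀ n, 0 ≤ g n) (hgsum : HasSum g 1)
    (hH : MeasureTheory.IntegrableOn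
      (fun v : ℝ => (1 - ∑' n : ℕ, g n * v ^ n) / (1 - v)) (Set.Ioo 0 1))
    (π : ℕ → ℝ) (hπnn : ∀ n, 0 ≤ π n) (hπsum : HasSum π 1)
    (hbal0 : 0 = -lam * π 0 + (mu + th) * π 1)
    (hbal : ∀ n : ℕ, 1 ≤ n →
      0 = -(lam + mu + (n : ℝ) * th) * π n + (mu + ((n : ℝ) + 1) * th) * π (n + 1) +
        lam * ∑ i ∈ Finset.Icc 1 n, g i * π (n - i)) :
    π 0 = ((mu / th) *
        ∫ u in (0:ℝ)..1,
          u ^ (mu / th - 1) *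
            Real.exp ((lam / th) *
              ∫ v in u..1, (1 - ∑' n : ℕ, g n * v ^ n) / (1 - v)))⁻¹ :=
  type0_pi_zero_formula_general lam mu th hmu hth g hg0 hgsum hH π hπsum hbal0 hbal
end

section
/- Let λ_1 > 0, θ_1 > 0 and β > 0 (in the order-book model, β = λ_0 + μ_A is the total rate of aggressive limit plus aggressive market orders), and let (h_i)_{i≥1} be nonnegative reals with Σ_{i≥1} h_i = 1. For j ≥ 1 define π_j = β Σ_{i=1}^∞ h_i Σ_{k=0}^{min(i−1,j−1)} C(i−1,k) (1/(j−1−k)!) (λ_1/θ_1)^{j−1−k} ∫_0^∞ e^{−βt} e^{−kθ_1 t} (1−e^{−θ_1 t})^{i+j−2−2k} e^{−(λ_1/θ_1)(1−e^{−θ_1 t})} dt. Then π_j ≥ 0 for all j ≥ 1 and Σ_{j=1}^∞ π_j = 1; i.e., the explicit formula of Model 1a defines a probability distribution on the positive integers. -/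
/-!
Started from `i` shares, the queue at time `t` holds the `Binomial(i, e^{-θt})` surviving shares
plus an independent `Poisson((λ/θ)(1 - e^{-θt}))` number of new ones, and `r_{ij}(t)` is the
Cauchy product of these two laws; hence `Σ_j r_{ij}(t) = 1`. All terms being nonnegative, the sum
over `j` can be moved inside the integral and past the sum over `i`, which leaves
`β Σ_i h_i ∫ e^{-βt} dt = Σ_i h_i = 1`.
-/

open Finset MeasureTheory Set Filter
open scoped Nat

section

open Real

theorem hasSum_tsum_swap_of_nonneg {ι κ : Type*} {F : ι → κ → ℝ}
    (hF : ∀ m j, 0 ≤ F m j) {g : ι → ℝ} {s : ℝ} (hrow : ∀ m, HasSum (F m) (g m))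
    (hg : HasSum g s) :
    HasSum (fun j => ∑' m, F m j) s := by
  have hsummable : Summable fun p : ι × κ => F p.1 p.2 :=
    (summable_prod_of_nonneg fun p => hF p.1 p.2).2
      ⟨fun m => (hrow m).summable, by simpa only [(hrow _).tsum_eq] using hg.summable⟩
  have htotal : HasSum (fun p : ι × κ => F p.1 p.2) s := by
    have := hsummable.hasSum
    rwa [(hsummable.hasSum.prod_fiberwise hrow).unique hg] at this
  exact ((Equiv.prodComm κ ι).hasSum_iff.2 htotal).prod_fiberwise
    fun j => (hsummable.prod_symm.prod_factor j).hasSum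

theorem HasSum.sum_antidiagonal_mul {f g : ℕ → ℝ} {a b : ℝ} (hf : HasSum f a)
    (hg : HasSum g b) :
    HasSum (fun n => ∑ kl ∈ antidiagonal n, f kl.1 * g kl.2) (a * b) := by
  have hf' : Summable fun n => ‖f n‖ := summable_norm_iff.2 hf.summable
  have hg' : Summable fun n => ‖g n‖ := summable_norm_iff.2 hg.summable
  rw [← hf.tsum_eq, ← hg.tsum_eq,
    tsum_mul_tsum_eq_tsum_sum_antidiagonal_of_summable_norm hf' hg']
  exact (summable_norm_sum_mul_antidiagonal_of_summable_norm hf' hg').of_norm.hasSum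

theorem hasSum_choose_mul_pow_mul_one_sub_pow (n : ℕ) (a : ℝ) :
    HasSum (fun k => (n.choose k : ℝ) * a ^ k * (1 - a) ^ (n - k)) 1 := by
  have hsum : ∑ k ∈ range (n + 1), (n.choose k : ℝ) * a ^ k * (1 - a) ^ (n - k) = 1 :=
    calc _ = (a + (1 - a)) ^ n := by rw [add_pow]; exact sum_congr rfl fun k _ => by ring
      _ = 1 := by rw [add_sub_cancel, one_pow]
  convert hasSum_sum_of_ne_finset_zero (L := .unconditional ℕ) fun k hk => ?_ using 1
  · exact hsum.symm
  · rw [Nat.choose_eq_zero_of_lt (by simpa using hk), Nat.cast_zero, zero_mul, zero_mul]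

theorem hasSum_exp_neg_mul_pow_div_factorial (y : ℝ) :
    HasSum (fun n => exp (-y) * y ^ n / n !) 1 := by
  convert! (NormedSpace.expSeries_div_hasSum_exp y).mul_left (exp (-y)) using 1
  · simp_rw [mul_div_assoc]
  · rw [← exp_eq_exp_ℝ, ← exp_add, neg_add_cancel, exp_zero]

end

namespace OrderBook

open Real

/-- The transition probability `r_{ij}(t)` of the queue, with
`i! / (k! (i-k)! (j-k)!)` written as `C(i, k) / (j-k)!`. -/
noncomputable def transitionProb (lam θ : ℝ) (i j : ℕ) (t : ℝ) : ℝ :=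
  ∑ k ∈ range (min (i + 1) (j + 1)),
    (i.choose k : ℝ) * (1 / (j - k)! : ℝ) * (lam / θ) ^ (j - k) *
      (exp (-(k : ℝ) * θ * t) * (1 - exp (-θ * t)) ^ (i + j - 2 * k) *
        exp (-(lam / θ) * (1 - exp (-θ * t))))

theorem transitionProb_eq_sum_antidiagonal (lam θ : ℝ) (i j : ℕ) (t : ℝ) :
    transitionProb lam θ i j t =
      ∑ kl ∈ antidiagonal j,
        (i.choose kl.1 : ℝ) * exp (-θ * t) ^ kl.1 * (1 - exp (-θ * t)) ^ (i - kl.1) *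
          (exp (-(lam / θ * (1 - exp (-θ * t)))) * (lam / θ * (1 - exp (-θ * t))) ^ kl.2 /
            kl.2 !) := by
  rw [Nat.sum_antidiagonal_eq_sum_range_succ_mk, transitionProb]
  refine (sum_congr rfl fun k hk => ?_).trans
    (sum_subset (range_subset_range.2 (min_le_right _ _)) fun k hkj hki => ?_)
  · obtain ⟨hki, hkj⟩ : k ≤ i ∧ k ≤ j := by simp at hk; omega
    rw [show i + j - 2 * k = (i - k) + (j - k) by omega,
      show -(k : ℝ) * θ * t = k * (-θ * t) by ring, exp_nat_mul, neg_mul (lam / θ), mul_pow]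
    ring
  · rw [Nat.choose_eq_zero_of_lt (by simp_all)]
    simp

theorem hasSum_transitionProb (lam θ : ℝ) (i : ℕ) (t : ℝ) :
    HasSum (fun j => transitionProb lam θ i j t) 1 := by
  simp_rw [transitionProb_eq_sum_antidiagonal]
  simpa using (hasSum_choose_mul_pow_mul_one_sub_pow i _).sum_antidiagonal_mul
    (hasSum_exp_neg_mul_pow_div_factorial _)

variable {lam θ t : ℝ}

theorem transitionProb_nonneg (hlam : 0 ≤ lam) (hθ : 0 ≤ θ) (ht : 0 ≤ t) (i j : ℕ) :
    0 ≤ transitionProb lam θ i j t := by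
  have hsurvive : 0 ≤ 1 - exp (-θ * t) := sub_nonneg.2 (exp_le_one_iff.2 (by nlinarith))
  rw [transitionProb_eq_sum_antidiagonal]
  generalize 1 - exp (-θ * t) = b at hsurvive ⊢
  positivity

@[fun_prop]
theorem continuous_transitionProb (lam θ : ℝ) (i j : ℕ) :
    Continuous (transitionProb lam θ i j) := by
  unfold transitionProb
  fun_prop

theorem integrableOn_exp_neg_mul_mul {β C : ℝ} (hβ : 0 < β) {u : ℝ → ℝ}
    (hu : AEStronglyMeasurable u (volume.restrict (Ioi 0))) (hbound : ∀ t > 0, |u t| ≤ C) :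
    IntegrableOn (fun t => exp (-β * t) * u t) (Ioi 0) := by
  refine ((exp_neg_integrableOn_Ioi 0 hβ).mul_const C).mono'
    ((continuous_exp.comp (continuous_const.mul continuous_id)).aestronglyMeasurable.mul hu) ?_
  filter_upwards [ae_restrict_mem measurableSet_Ioi] with t ht
  rw [norm_mul, norm_of_nonneg (exp_nonneg _)]
  exact mul_le_mul_of_nonneg_left (hbound t ht) (exp_nonneg _)

theorem integral_exp_neg_mul_Ioi {β : ℝ} (hβ : 0 < β) :
    ∫ t in Ioi 0, exp (-β * t) = 1 / β := by
  rw [integral_exp_mul_Ioi (neg_lt_zero.2 hβ), mul_zero, exp_zero, neg_div_neg_eq]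

theorem hasSum_integral_exp_neg_mul_transitionProb {β : ℝ} (hlam : 0 ≤ lam) (hθ : 0 ≤ θ)
    (hβ : 0 < β) (i : ℕ) :
    HasSum (fun j => ∫ t in Ioi 0, exp (-β * t) * transitionProb lam θ i j t) (1 / β) := by
  have hsum : ∀ t,
      HasSum (fun j => exp (-β * t) * transitionProb lam θ i j t) (exp (-β * t)) :=
    fun t => by simpa using (hasSum_transitionProb lam θ i t).mul_left (exp (-β * t))
  have hnonneg : ∀ j, ∀ t ∈ Ioi (0 : ℝ),
      0 ≤ exp (-β * t) * transitionProb lam θ i j t :=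
    fun j t ht => mul_nonneg (exp_nonneg _) (transitionProb_nonneg hlam hθ (le_of_lt ht) i j)
  rw [← integral_exp_neg_mul_Ioi hβ]
  refine hasSum_integral_of_dominated_convergence
    (fun j t => exp (-β * t) * transitionProb lam θ i j t)
    (fun j => (by fun_prop : Continuous _).aestronglyMeasurable) (fun j => ?_)
    (ae_of_all _ fun t => (hsum t).summable) ?_ (ae_of_all _ hsum)
  · filter_upwards [ae_restrict_mem measurableSet_Ioi] with t ht
    exact (norm_of_nonneg (hnonneg j t ht)).le
  · simp only [fun t => (hsum t).tsum_eq]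
    exact exp_neg_integrableOn_Ioi 0 hβ

theorem abs_exp_mul_one_sub_exp_pow_mul_exp_le_one (hlam : 0 ≤ lam) (hθ : 0 ≤ θ)
    (ht : 0 ≤ t) (k e : ℕ) :
    |exp (-(k : ℝ) * θ * t) * (1 - exp (-θ * t)) ^ e * exp (-(lam / θ) * (1 - exp (-θ * t)))|
      ≤ 1 := by
  have hsurvive : 0 ≤ 1 - exp (-θ * t) := sub_nonneg.2 (exp_le_one_iff.2 (by nlinarith))
  have hsurvive' : 1 - exp (-θ * t) ≤ 1 := sub_le_self _ (exp_nonneg _)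
  rw [abs_of_nonneg (by positivity)]
  refine mul_le_one₀ (mul_le_one₀ ?_ (by positivity) (pow_le_one₀ hsurvive hsurvive'))
    (exp_nonneg _) ?_ <;> rw [exp_le_one_iff]
  · have : 0 ≤ (k : ℝ) * θ * t := by positivity
    linarith
  · have : 0 ≤ lam / θ * (1 - exp (-θ * t)) := by positivity
    linarith

theorem sum_mul_integral_eq_integral_exp_neg_mul_transitionProb {β : ℝ} (hlam : 0 ≤ lam)
    (hθ : 0 ≤ θ) (hβ : 0 < β) (i j : ℕ) :
    ∑ k ∈ range (min (i + 1) (j + 1)),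
        (i.choose k : ℝ) * (1 / (j - k)! : ℝ) * (lam / θ) ^ (j - k) *
          ∫ t in Ioi 0, exp (-β * t) * exp (-(k : ℝ) * θ * t) *
            (1 - exp (-θ * t)) ^ (i + j - 2 * k) * exp (-(lam / θ) * (1 - exp (-θ * t))) =
      ∫ t in Ioi 0, exp (-β * t) * transitionProb lam θ i j t := by
  have hint : ∀ k e : ℕ, IntegrableOn (fun t => exp (-β * t) * exp (-(k : ℝ) * θ * t) *
      (1 - exp (-θ * t)) ^ e * exp (-(lam / θ) * (1 - exp (-θ * t)))) (Ioi 0) := fun k e => by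
    simpa only [mul_assoc] using integrableOn_exp_neg_mul_mul hβ
      (by fun_prop : Continuous _).aestronglyMeasurable
      fun t ht => abs_exp_mul_one_sub_exp_pow_mul_exp_le_one hlam hθ (le_of_lt ht) k e
  simp_rw [← integral_const_mul]
  rw [← integral_finsetSum _ fun k _ => (hint k _).const_mul _]
  congr 1 with t
  rw [transitionProb, mul_sum]
  exact sum_congr rfl fun k _ => by ring

end OrderBook

open OrderBook in
/-- The explicit formula of Model 1a for the stationary
distribution of the volume at the best quote (unit-size limit orders at rate `λ₁`,
per-share cancellation rate `θ₁`, killing rate `β = λ₀ + μ_A`, resurrection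
distribution `(h_i)_{i≥1}`) defines a probability distribution on the positive
integers: `π_j ≥ 0` for all `j ≥ 1` and `Σ_{j≥1} π_j = 1`. -/
theorem model1a_stationary_is_probability
    (lam1 th1 β : ℝ) (hlam1 : 0 < lam1) (hth1 : 0 < th1) (hβ : 0 < β)
    (h : ℕ → ℝ) (hh0 : h 0 = 0) (hhnn : ∀ i, 0 ≤ h i) (hhsum : HasSum h 1) :
    let π : ℕ → ℝ := fun j =>
      β * ∑' m : ℕ, h (m + 1) *
        ∑ k ∈ Finset.range (min (m + 1) j),
          (Nat.choose m k : ℝ) * (1 / (Nat.factorial (j - 1 - k) : ℝ)) *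
            (lam1 / th1) ^ (j - 1 - k) *
            ∫ t in Set.Ioi (0:ℝ),
              Real.exp (-β * t) * Real.exp (-(k : ℝ) * th1 * t) *
                (1 - Real.exp (-th1 * t)) ^ (m + 1 + j - 2 - 2 * k) *
                Real.exp (-(lam1 / th1) * (1 - Real.exp (-th1 * t)))
    (∀ j : ℕ, 1 ≤ j → 0 ≤ π j) ∧ HasSum (fun j : ℕ => π (j + 1)) 1 := by
  intro π
  set I : ℕ → ℕ → ℝ := fun m j =>
    ∫ t in Ioi 0, Real.exp (-β * t) * transitionProb lam1 th1 m j t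
  have hπ : ∀ j, π (j + 1) = β * ∑' m, h (m + 1) * I m j := fun j => by
    have hexp : ∀ m k : ℕ, m + 1 + (j + 1) - 2 - 2 * k = m + j - 2 * k := fun m k => by omega
    simp only [π, I, hexp, Nat.add_sub_cancel,
      sum_mul_integral_eq_integral_exp_neg_mul_transitionProb hlam1.le hth1.le hβ]
  have hI : ∀ m, HasSum (I m) (1 / β) :=
    hasSum_integral_exp_neg_mul_transitionProb hlam1.le hth1.le hβ
  have hI_nonneg : ∀ m j, 0 ≤ I m j := fun m j =>
    setIntegral_nonneg measurableSet_Ioi fun t ht =>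
      mul_nonneg (Real.exp_nonneg _) (transitionProb_nonneg hlam1.le hth1.le (le_of_lt ht) m j)
  have hh : HasSum (fun m => h (m + 1)) 1 := by
    simpa [hh0] using (hasSum_nat_add_iff' 1).2 hhsum
  refine ⟨fun j hj => ?_, ?_⟩
  · obtain ⟨j, rfl⟩ := Nat.exists_eq_add_of_le' hj
    rw [hπ]
    exact mul_nonneg hβ.le (tsum_nonneg fun m => mul_nonneg (hhnn _) (hI_nonneg m j))
  · have hswap := hasSum_tsum_swap_of_nonneg (fun m j => mul_nonneg (hhnn _) (hI_nonneg m j))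
      (fun m => (hI m).mul_left (h (m + 1))) (hh.mul_right (1 / β))
    simpa only [hπ, one_mul, mul_one_div_cancel hβ.ne'] using hswap.mul_left β
end
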